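/- arXiv:1001.0736 — 4 statements merged into one kernel-verified Lean document; each statement's English description precedes it below -/
import Mathlib

section
/- Let r ∈ ℝ^N, let Z ∈ ℝ^{N×k}, and let λ > 0. Then the zero vector minimizes the function f(β) = (1/2)‖r − Zβ‖₂² + λ‖β‖₂ over β ∈ ℝ^k if and only if ‖Zᵀr‖₂ ≤ λ. -/
/-- Euclidean norm of a vector in ℝ^n. -/
noncomputable def norm2 {n : ℕ} (v : Fin n → ℝ) : ℝ :=
  Real.sqrt (∑ i, v i ^ 2)

lemma norm2_nonneg {n : ℕ} (v : Fin n → ℝ) : 0 ≤ norm2 v := Real.sqrt_nonneg _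

lemma sq_norm2 {n : ℕ} (v : Fin n → ℝ) : norm2 v ^ 2 = ∑ i, v i ^ 2 :=
  Real.sq_sqrt (Finset.sum_nonneg fun i _ => sq_nonneg _)

lemma norm2_zero {n : ℕ} : norm2 (0 : Fin n → ℝ) = 0 := by
  simp [norm2]

lemma norm2_smul {n : ℕ} (t : ℝ) (ht : 0 ≤ t) (v : Fin n → ℝ) :
    norm2 (fun i => t * v i) = t * norm2 v := by
  unfold norm2
  rw [show ∑ i, (t * v i) ^ 2 = t ^ 2 * ∑ i, v i ^ 2 by rw [Finset.mul_sum]; ring_nf,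
    Real.sqrt_mul (sq_nonneg t), Real.sqrt_sq ht]

/-- Cauchy-Schwarz in our notation. -/
lemma dot_le_norm2_mul_norm2 {n : ℕ} (u v : Fin n → ℝ) :
    ∑ i, u i * v i ≤ norm2 u * norm2 v := by
  have h := Finset.sum_mul_sq_le_sq_mul_sq Finset.univ u v
  have h1 : (norm2 u * norm2 v) ^ 2 = (∑ i, u i ^ 2) * ∑ i, v i ^ 2 := by
    rw [mul_pow, sq_norm2, sq_norm2]
  have h2 : 0 ≤ norm2 u * norm2 v := mul_nonneg (norm2_nonneg u) (norm2_nonneg v)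
  nlinarith [h, h1, h2]

/-- For `λ > 0`, the zero vector minimizes the blockwise group lasso objective
`f(β) = (1/2)‖r − Zβ‖₂² + λ‖β‖₂` over `β ∈ ℝ^k` if and only if `‖Zᵀr‖₂ ≤ λ`. -/
theorem group_lasso_zero_iff (N k : ℕ) (r : Fin N → ℝ)
    (Z : Matrix (Fin N) (Fin k) ℝ) (lam : ℝ) (hlam : 0 < lam) :
    (∀ β : Fin k → ℝ,
        (1 / 2) * norm2 (r - Z.mulVec 0) ^ 2 + lam * norm2 (0 : Fin k → ℝ)
          ≤ (1 / 2) * norm2 (r - Z.mulVec β) ^ 2 + lam * norm2 β)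
      ↔ norm2 (Z.transpose.mulVec r) ≤ lam := by
  set g : Fin k → ℝ := Z.transpose.mulVec r with hg
  -- expansion of the squared residual norm
  have hdot : ∀ β : Fin k → ℝ, ∑ i, r i * Z.mulVec β i = ∑ j, g j * β j := by
    intro β
    have : dotProduct r (Z.mulVec β) = dotProduct (Z.transpose.mulVec r) β := by
      rw [Matrix.dotProduct_mulVec, Matrix.mulVec_transpose]
    simpa [dotProduct] using this
  have expand : ∀ β : Fin k → ℝ,
      norm2 (r - Z.mulVec β) ^ 2
        = (∑ i, r i ^ 2) - 2 * (∑ j, g j * β j) + ∑ i, (Z.mulVec β i) ^ 2 := by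
    intro β
    rw [sq_norm2, ← hdot β]
    rw [Finset.mul_sum, ← Finset.sum_sub_distrib, ← Finset.sum_add_distrib]
    apply Finset.sum_congr rfl
    intro i _
    simp [Pi.sub_apply]
    ring
  -- reformulate the minimization condition
  have key : (∀ β : Fin k → ℝ,
      (1 / 2) * norm2 (r - Z.mulVec 0) ^ 2 + lam * norm2 (0 : Fin k → ℝ)
        ≤ (1 / 2) * norm2 (r - Z.mulVec β) ^ 2 + lam * norm2 β)
      ↔ ∀ β : Fin k → ℝ,
          ∑ j, g j * β j ≤ (1 / 2) * (∑ i, (Z.mulVec β i) ^ 2) + lam * norm2 β := by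
    constructor
    · intro h β
      have := h β
      rw [expand β, expand 0] at this
      simp [norm2_zero, Matrix.mulVec_zero] at this
      linarith
    · intro h β
      have := h β
      rw [expand β, expand 0]
      simp [norm2_zero, Matrix.mulVec_zero]
      linarith
  rw [key]
  constructor
  · -- forward direction
    intro h
    set G := norm2 g with hG
    have hGnn : 0 ≤ G := norm2_nonneg g
    have hG2 : G ^ 2 = ∑ j, g j ^ 2 := sq_norm2 g
    set C := ∑ i, (Z.mulVec g i) ^ 2 with hC
    have hCnn : 0 ≤ C := Finset.sum_nonneg fun i _ => sq_nonneg _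
    -- plug in β = t • g for t > 0
    have step : ∀ t : ℝ, 0 < t → G ^ 2 ≤ t * C / 2 + lam * G := by
      intro t ht
      have := h (fun j => t * g j)
      have hmv : Z.mulVec (fun j => t * g j) = fun i => t * Z.mulVec g i := by
        funext i
        simp only [Matrix.mulVec, dotProduct, Finset.mul_sum]
        exact Finset.sum_congr rfl fun j _ => by ring
      rw [norm2_smul t ht.le g, hmv] at this
      have h1 : ∑ j, g j * (t * g j) = t * ∑ j, g j ^ 2 := by
        rw [Finset.mul_sum]; exact Finset.sum_congr rfl fun j _ => by ring
      have h2 : ∑ i, (t * Z.mulVec g i) ^ 2 = t ^ 2 * C := by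
        rw [hC, Finset.mul_sum]; ring_nf
      rw [h1, h2, ← hG2] at this
      -- this : t * G^2 ≤ (1/2)*(t^2*C) + lam*(t*G)
      nlinarith [this, ht]
    have hle : G ^ 2 ≤ lam * G := by
      refine le_of_forall_pos_le_add ?_
      intro ε hε
      have hC1 : 0 < C + 1 := by linarith
      have ht : 0 < 2 * ε / (C + 1) := by positivity
      have := step (2 * ε / (C + 1)) ht
      have htC : 2 * ε / (C + 1) * C / 2 ≤ ε := by
        rw [div_mul_eq_mul_div, div_div, div_le_iff₀ (by linarith)]
        nlinarith
      linarith
    rcases eq_or_lt_of_le hGnn with hG0 | hG0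
    · linarith
    · nlinarith
  · -- backward direction
    intro h β
    have hcs : ∑ j, g j * β j ≤ norm2 g * norm2 β := dot_le_norm2_mul_norm2 g β
    have hB : 0 ≤ ∑ i, (Z.mulVec β i) ^ 2 := Finset.sum_nonneg fun i _ => sq_nonneg _
    have := mul_le_mul_of_nonneg_right h (norm2_nonneg β)
    linarith
end

section
/- Let r ∈ ℝ^N, let Z ∈ ℝ^{N×k} satisfy ZᵀZ = I (orthonormal columns), let λ > 0, and set s = Zᵀr. Then the unique minimizer over β ∈ ℝ^k of f(β) = (1/2)‖r − Zβ‖₂² + λ‖β‖₂ is β̂ = (1 − λ/‖s‖₂)₊ · s, where x₊ = max(x, 0) and β̂ = 0 is understood when s = 0. -/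
open Matrix RealInnerProductSpace

theorem max_one_sub_div_mul_self {lam a : ℝ} (hlam : 0 ≤ lam) (ha : 0 ≤ a) :
    max (1 - lam / a) 0 * a = max (a - lam) 0 := by
  rcases ha.eq_or_lt with rfl | ha
  · simp [hlam]
  · rw [max_mul_of_nonneg _ _ ha.le, sub_mul, div_mul_cancel₀ _ ha.ne', one_mul, zero_mul]

theorem one_sub_max_one_sub_div_mul_self {lam a : ℝ} (hlam : 0 ≤ lam) (ha : 0 ≤ a) :
    (1 - max (1 - lam / a) 0) * a = min a lam := by
  rw [sub_mul, one_mul, max_one_sub_div_mul_self hlam ha]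
  rcases le_total a lam with h | h
  · rw [max_eq_right (by linarith), min_eq_left h, sub_zero]
  · rw [max_eq_left (by linarith), min_eq_right h, sub_sub_cancel]

section BlockSoftThreshold

variable {E : Type*} [NormedAddCommGroup E] [InnerProductSpace ℝ E]

noncomputable def blockSoftThreshold (lam : ℝ) (s : E) : E :=
  max (1 - lam / ‖s‖) 0 • s

noncomputable def proxNormObjective (lam : ℝ) (s x : E) : ℝ :=
  1 / 2 * ‖s - x‖ ^ 2 + lam * ‖x‖

theorem sub_blockSoftThreshold (lam : ℝ) (s : E) :
    s - blockSoftThreshold lam s = (1 - max (1 - lam / ‖s‖) 0) • s := by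
  rw [blockSoftThreshold, sub_smul, one_smul]

theorem norm_blockSoftThreshold {lam : ℝ} (hlam : 0 ≤ lam) (s : E) :
    ‖blockSoftThreshold lam s‖ = max (‖s‖ - lam) 0 := by
  rw [blockSoftThreshold, norm_smul_of_nonneg (le_max_right _ _),
    max_one_sub_div_mul_self hlam (norm_nonneg s)]

theorem norm_sub_blockSoftThreshold {lam : ℝ} (hlam : 0 ≤ lam) (s : E) :
    ‖s - blockSoftThreshold lam s‖ = min ‖s‖ lam := by
  rw [sub_blockSoftThreshold, norm_smul, Real.norm_eq_abs,
    ← abs_of_nonneg (norm_nonneg s), ← abs_mul, abs_of_nonneg (norm_nonneg s),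
    one_sub_max_one_sub_div_mul_self hlam (norm_nonneg s),
    abs_of_nonneg (le_min (norm_nonneg s) hlam)]

theorem inner_sub_blockSoftThreshold {lam : ℝ} (hlam : 0 ≤ lam) (s : E) :
    ⟪s - blockSoftThreshold lam s, blockSoftThreshold lam s⟫
      = lam * ‖blockSoftThreshold lam s‖ := by
  set c := max (1 - lam / ‖s‖) 0
  have hfactor : ⟪s - blockSoftThreshold lam s, blockSoftThreshold lam s⟫
      = ((1 - c) * ‖s‖) * (c * ‖s‖) := by
    rw [sub_blockSoftThreshold, blockSoftThreshold, real_inner_smul_left, real_inner_smul_right,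
      real_inner_self_eq_norm_sq]
    ring
  rw [hfactor, one_sub_max_one_sub_div_mul_self hlam (norm_nonneg s),
    max_one_sub_div_mul_self hlam (norm_nonneg s), norm_blockSoftThreshold hlam]
  rcases le_total ‖s‖ lam with h | h
  · rw [max_eq_right (by linarith), mul_zero, mul_zero]
  · rw [min_eq_right h]

theorem proxNormObjective_add_half_norm_sub_sq_le {lam : ℝ} {s x : E}
    (hnorm : ‖s - x‖ ≤ lam) (hinner : ⟪s - x, x⟫ = lam * ‖x‖) (y : E) :
    proxNormObjective lam s x + 1 / 2 * ‖y - x‖ ^ 2 ≤ proxNormObjective lam s y := by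
  have hexpand : ‖s - y‖ ^ 2 = ‖s - x‖ ^ 2 - 2 * ⟪s - x, y - x⟫ + ‖y - x‖ ^ 2 := by
    rw [← norm_sub_sq_real, sub_sub_sub_cancel_right]
  have hcs : ⟪s - x, y⟫ ≤ lam * ‖y‖ :=
    (real_inner_le_norm _ _).trans (mul_le_mul_of_nonneg_right hnorm (norm_nonneg y))
  rw [proxNormObjective, proxNormObjective, hexpand, inner_sub_right, hinner]
  linarith

theorem proxNormObjective_blockSoftThreshold_lt {lam : ℝ} (hlam : 0 ≤ lam) {s y : E}
    (hy : y ≠ blockSoftThreshold lam s) :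
    proxNormObjective lam s (blockSoftThreshold lam s) < proxNormObjective lam s y := by
  have hle := proxNormObjective_add_half_norm_sub_sq_le
    ((norm_sub_blockSoftThreshold hlam s).trans_le (min_le_right _ _))
    (inner_sub_blockSoftThreshold hlam s) y
  have hpos : 0 < ‖y - blockSoftThreshold lam s‖ := norm_pos_iff.mpr (sub_ne_zero.mpr hy)
  nlinarith

end BlockSoftThreshold

theorem norm2_eq_norm_toLp {n : ℕ} (v : Fin n → ℝ) : norm2 v = ‖WithLp.toLp 2 v‖ := by
  simp [norm2, EuclideanSpace.norm_eq]

theorem norm2_sq {n : ℕ} (v : Fin n → ℝ) : norm2 v ^ 2 = v ⬝ᵥ v := by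
  rw [norm2, Real.sq_sqrt (by positivity)]
  simp [dotProduct, sq]

theorem mulVec_dotProduct_mulVec_self {R m n : Type*} [CommSemiring R] [Fintype m] [Fintype n]
    [DecidableEq n] {Z : Matrix m n R} (hZ : Zᵀ * Z = 1) (v : n → R) :
    Z *ᵥ v ⬝ᵥ Z *ᵥ v = v ⬝ᵥ v := by
  rw [dotProduct_mulVec, ← mulVec_transpose, mulVec_mulVec, hZ, one_mulVec]

theorem norm2_sub_mulVec_sq {m n : ℕ} {Z : Matrix (Fin m) (Fin n) ℝ} (hZ : Zᵀ * Z = 1)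
    (r : Fin m → ℝ) (β : Fin n → ℝ) :
    norm2 (r - Z *ᵥ β) ^ 2 = norm2 r ^ 2 - norm2 (Zᵀ *ᵥ r) ^ 2 + norm2 (Zᵀ *ᵥ r - β) ^ 2 := by
  simp only [norm2_sq, sub_dotProduct, dotProduct_sub, mulVec_dotProduct_mulVec_self hZ]
  rw [dotProduct_comm (Z *ᵥ β), dotProduct_mulVec, ← mulVec_transpose,
    dotProduct_comm β (Zᵀ *ᵥ r)]
  ring

/-- If `ZᵀZ = I` (orthonormal columns), `λ > 0` and `s = Zᵀr`, then the unique
minimizer of `f(β) = (1/2)‖r − Zβ‖₂² + λ‖β‖₂` is `β̂ = (1 − λ/‖s‖₂)₊ · s`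
(when `s = 0` this formula gives `β̂ = 0`, using the convention `λ/0 = 0`). -/
theorem group_lasso_orthonormal_closed_form (N k : ℕ) (r : Fin N → ℝ)
    (Z : Matrix (Fin N) (Fin k) ℝ)
    (hZ : Z.transpose * Z = (1 : Matrix (Fin k) (Fin k) ℝ))
    (lam : ℝ) (hlam : 0 < lam)
    (s : Fin k → ℝ) (hs : s = Z.transpose.mulVec r) :
    ∀ β : Fin k → ℝ, β ≠ (max (1 - lam / norm2 s) 0) • s →
      (1 / 2) * norm2 (r - Z.mulVec ((max (1 - lam / norm2 s) 0) • s)) ^ 2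
          + lam * norm2 ((max (1 - lam / norm2 s) 0) • s)
        < (1 / 2) * norm2 (r - Z.mulVec β) ^ 2 + lam * norm2 β := by
  intro β hβ
  subst hs
  have hne : WithLp.toLp 2 β ≠ blockSoftThreshold lam (WithLp.toLp 2 (Zᵀ *ᵥ r)) := by
    rw [blockSoftThreshold, ← norm2_eq_norm_toLp, ← WithLp.toLp_smul]
    exact (WithLp.toLp_injective 2).ne hβ
  have hmin := proxNormObjective_blockSoftThreshold_lt hlam.le hne
  rw [proxNormObjective, proxNormObjective, blockSoftThreshold] at hmin
  rw [norm2_sub_mulVec_sq hZ, norm2_sub_mulVec_sq hZ]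
  simp only [norm2_eq_norm_toLp, WithLp.toLp_sub, WithLp.toLp_smul] at hmin ⊢
  linarith
end

section
/- Let r ∈ ℝ^N, Z ∈ ℝ^{N×k} with columns Z₁,…,Z_k, λ₁ ≥ 0, λ₂ > 0, fix j ∈ {1,…,k}, and fix the coordinates θ_m for m ≠ j with (θ_m)_{m≠j} ≠ 0. Let r_j = r − Σ_{m≠j} Z_m θ_m. If |Z_jᵀ r_j| ≤ λ₂, then the choice θ_j = 0 minimizes the one-dimensional function θ_j ↦ (1/2)‖r − Zθ‖₂² + λ₁‖θ‖₂ + λ₂‖θ‖₁ over θ_j ∈ ℝ. -/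
/-- Coordinate-descent step: with all coordinates `θ_m`, `m ≠ j`, held fixed
(and not all zero) and `r_j = r − Σ_{m≠j} Z_m θ_m` the partial residual, if
`|Z_jᵀ r_j| ≤ λ₂` then `θ_j = 0` minimizes the one-dimensional function
`θ_j ↦ (1/2)‖r − Zθ‖₂² + λ₁‖θ‖₂ + λ₂‖θ‖₁`. -/
theorem coordinate_zero_condition (N k : ℕ) (r : Fin N → ℝ)
    (Z : Matrix (Fin N) (Fin k) ℝ) (lam1 lam2 : ℝ)
    (hlam1 : 0 ≤ lam1) (hlam2 : 0 < lam2)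
    (j : Fin k) (θ : Fin k → ℝ) (hfix : ∃ m, m ≠ j ∧ θ m ≠ 0)
    (rj : Fin N → ℝ)
    (hrj : rj = fun i => r i - ∑ m ∈ Finset.univ.erase j, Z i m * θ m)
    (hsmall : |∑ i, Z i j * rj i| ≤ lam2) :
    ∀ x : ℝ,
      (1 / 2) * norm2 (r - Z.mulVec (Function.update θ j 0)) ^ 2
          + lam1 * norm2 (Function.update θ j 0)
          + lam2 * ∑ m, |Function.update θ j 0 m|
        ≤ (1 / 2) * norm2 (r - Z.mulVec (Function.update θ j x)) ^ 2
          + lam1 * norm2 (Function.update θ j x)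
          + lam2 * ∑ m, |Function.update θ j x m| := by
  intro x
  set S := ∑ i, Z i j * rj i with hS
  set Q := ∑ i, (Z i j) ^ 2 with hQ
  set T := ∑ m ∈ Finset.univ.erase j, |θ m| with hT
  set T2 := ∑ m ∈ Finset.univ.erase j, (θ m) ^ 2 with hT2
  -- residual identity
  have key : ∀ y : ℝ, (r - Z.mulVec (Function.update θ j y)) = fun i => rj i - y * Z i j := by
    intro y
    funext i
    have : Z.mulVec (Function.update θ j y) i
        = Z i j * y + ∑ m ∈ Finset.univ.erase j, Z i m * θ m := by
      rw [Matrix.mulVec, dotProduct,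
        ← Finset.add_sum_erase _ _ (Finset.mem_univ j)]
      congr 1
      · rw [Function.update_self]
      · exact Finset.sum_congr rfl fun m hm => by
          rw [Function.update_of_ne (Finset.ne_of_mem_erase hm)]
    simp [this, hrj]
    ring
  -- squared norm expansion
  have sqn : ∀ y : ℝ, norm2 (r - Z.mulVec (Function.update θ j y)) ^ 2
      = (∑ i, rj i ^ 2) - 2 * y * S + y ^ 2 * Q := by
    intro y
    rw [key y, norm2, Real.sq_sqrt (Finset.sum_nonneg fun i _ => sq_nonneg _)]
    have : ∀ i : Fin N, (rj i - y * Z i j) ^ 2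
        = rj i ^ 2 - 2 * y * (Z i j * rj i) + y ^ 2 * (Z i j) ^ 2 := fun i => by ring
    rw [Finset.sum_congr rfl fun i _ => this i, Finset.sum_add_distrib,
      Finset.sum_sub_distrib, ← Finset.mul_sum, ← Finset.mul_sum, hS, hQ]
  -- l1 sum
  have l1 : ∀ y : ℝ, (∑ m, |Function.update θ j y m|) = |y| + T := by
    intro y
    rw [← Finset.add_sum_erase _ _ (Finset.mem_univ j), Function.update_self, hT]
    congr 1
    exact Finset.sum_congr rfl fun m hm => by
      rw [Function.update_of_ne (Finset.ne_of_mem_erase hm)]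
  -- l2 sum
  have l2 : ∀ y : ℝ, norm2 (Function.update θ j y) = Real.sqrt (y ^ 2 + T2) := by
    intro y
    rw [norm2, ← Finset.add_sum_erase _ _ (Finset.mem_univ j), Function.update_self, hT2]
    congr 2
    exact Finset.sum_congr rfl fun m hm => by
      rw [Function.update_of_ne (Finset.ne_of_mem_erase hm)]
  have l2mono : norm2 (Function.update θ j 0) ≤ norm2 (Function.update θ j x) := by
    rw [l2 0, l2 x]
    exact Real.sqrt_le_sqrt (by nlinarith [sq_nonneg x])
  have hxS : x * S ≤ |x| * lam2 := by
    calc x * S ≤ |x * S| := le_abs_self _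
    _ = |x| * |S| := abs_mul x S
    _ ≤ |x| * lam2 := by
        exact mul_le_mul_of_nonneg_left hsmall (abs_nonneg x)
  have hQ0 : 0 ≤ Q := Finset.sum_nonneg fun i _ => sq_nonneg _
  rw [sqn 0, sqn x, l1 0, l1 x]
  simp only [abs_zero]
  nlinarith [sq_nonneg x, mul_nonneg (sq_nonneg x) hQ0,
    mul_le_mul_of_nonneg_left l2mono hlam1]
end

section
/- Let r ∈ ℝ^N, Z ∈ ℝ^{N×k} with columns Z₁,…,Z_k, λ₁ > 0, λ₂ > 0, and suppose θ ∈ ℝ^k satisfies: (i) for every j with θ_j = 0 and θ ≠ 0, |Z_jᵀ(r − Zθ)| ≤ λ₂; (ii) for every j with θ_j ≠ 0, Z_jᵀ(r − Zθ) = λ₁·θ_j/‖θ‖₂ + λ₂·sign(θ_j); and (iii) if θ = 0, there exist s, t ∈ ℝ^k with ‖s‖₂ ≤ 1, t_j ∈ [−1,1], and Z_jᵀr = λ₁ s_j + λ₂ t_j for all j. Then θ is a global minimizer of f(θ) = (1/2)‖r − Zθ‖₂² + λ₁‖θ‖₂ + λ₂‖θ‖₁ over ℝ^k. -/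
lemma cauchy_norm2 {n : ℕ} (f g : Fin n → ℝ) :
    ∑ i, f i * g i ≤ norm2 f * norm2 g :=
  Real.sum_mul_le_sqrt_mul_sqrt _ f g

lemma real_sign_mul_self (x : ℝ) : Real.sign x * x = |x| := by
  rcases lt_trichotomy x 0 with h | h | h
  · rw [Real.sign_of_neg h, abs_of_neg h]; ring
  · simp [h]
  · rw [Real.sign_of_pos h, abs_of_pos h]; ring

lemma abs_sign_le_one (x : ℝ) : |Real.sign x| ≤ 1 := by
  rcases Real.sign_apply_eq x with h | h | h <;> rw [h] <;> norm_num

/-- Sufficiency of the subgradient equations for global optimality of the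
blockwise sparse group lasso objective
`f(θ) = (1/2)‖r − Zθ‖₂² + λ₁‖θ‖₂ + λ₂‖θ‖₁`: if
(i) `|Z_jᵀ(r − Zθ)| ≤ λ₂` whenever `θ_j = 0` and `θ ≠ 0`,
(ii) `Z_jᵀ(r − Zθ) = λ₁·θ_j/‖θ‖₂ + λ₂·sign(θ_j)` whenever `θ_j ≠ 0`, and
(iii) if `θ = 0` there exist `s, t` with `‖s‖₂ ≤ 1`, `t_j ∈ [−1,1]` and
`Z_jᵀr = λ₁ s_j + λ₂ t_j` for all `j`, then `θ` is a global minimizer. -/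
theorem sparse_group_lasso_subgradient_sufficient (N k : ℕ) (r : Fin N → ℝ)
    (Z : Matrix (Fin N) (Fin k) ℝ) (lam1 lam2 : ℝ)
    (hlam1 : 0 < lam1) (hlam2 : 0 < lam2) (θ : Fin k → ℝ)
    (hzero : ∀ j : Fin k, θ j = 0 → θ ≠ 0 →
      |∑ i, Z i j * (r - Z.mulVec θ) i| ≤ lam2)
    (hnonzero : ∀ j : Fin k, θ j ≠ 0 →
      ∑ i, Z i j * (r - Z.mulVec θ) i
        = lam1 * θ j / norm2 θ + lam2 * Real.sign (θ j))
    (hall : θ = 0 → ∃ s t : Fin k → ℝ, norm2 s ≤ 1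
      ∧ (∀ j, t j ∈ Set.Icc (-1 : ℝ) 1)
      ∧ ∀ j, Z.transpose.mulVec r j = lam1 * s j + lam2 * t j) :
    ∀ θ' : Fin k → ℝ,
      (1 / 2) * norm2 (r - Z.mulVec θ) ^ 2 + lam1 * norm2 θ
          + lam2 * ∑ j, |θ j|
        ≤ (1 / 2) * norm2 (r - Z.mulVec θ') ^ 2 + lam1 * norm2 θ'
          + lam2 * ∑ j, |θ' j| := by
  intro θ'
  set ρ : Fin N → ℝ := r - Z.mulVec θ with hρ
  -- Obtain subgradient vectors s, t
  obtain ⟨s, t, hs, ht, hst, hsθ, htθ⟩ :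
      ∃ s t : Fin k → ℝ, norm2 s ≤ 1 ∧ (∀ j, |t j| ≤ 1)
        ∧ (∀ j, ∑ i, Z i j * ρ i = lam1 * s j + lam2 * t j)
        ∧ (∑ j, s j * θ j = norm2 θ) ∧ (∀ j, t j * θ j = |θ j|) := by
    by_cases hθ0 : θ = 0
    · obtain ⟨s, t, hs, ht, hst⟩ := hall hθ0
      refine ⟨s, t, hs, fun j => abs_le.2 ⟨(ht j).1, (ht j).2⟩, fun j => ?_, ?_, fun j => ?_⟩
      · have := hst j
        rw [Matrix.mulVec, dotProduct] at this
        simp only [Matrix.transpose_apply] at this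
        rw [← this, hρ, hθ0]
        simp [Matrix.mulVec_zero]
      · simp [hθ0, norm2]
      · simp [hθ0]
    · have hnpos : 0 < norm2 θ := by
        have : ∃ j, θ j ≠ 0 := by
          by_contra h
          push_neg at h
          exact hθ0 (funext h)
        obtain ⟨j, hj⟩ := this
        have hsum : 0 < ∑ i, θ i ^ 2 :=
          Finset.sum_pos' (fun i _ => sq_nonneg _)
            ⟨j, Finset.mem_univ j, by positivity⟩
        exact Real.sqrt_pos.2 hsum
      refine ⟨fun j => θ j / norm2 θ,
        fun j => if θ j = 0 then (∑ i, Z i j * ρ i) / lam2 else Real.sign (θ j),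
        ?_, ?_, ?_, ?_, ?_⟩
      · have h2 : norm2 (fun j => θ j / norm2 θ) ^ 2 = 1 := by
          rw [sq_norm2]
          have h1 : ∑ j, (θ j / norm2 θ) ^ 2 = (∑ j, θ j ^ 2) / norm2 θ ^ 2 := by
            rw [Finset.sum_div]
            exact Finset.sum_congr rfl fun j _ => by ring
          rw [h1, ← sq_norm2, div_self (by positivity)]
        nlinarith [norm2_nonneg (fun j => θ j / norm2 θ)]
      · intro j
        by_cases hj : θ j = 0
        · simp only [hj, if_pos]
          rw [abs_div, abs_of_pos hlam2, div_le_one hlam2]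
          exact hzero j hj hθ0
        · simp only [hj, if_neg, not_false_iff, if_false]
          exact abs_sign_le_one _
      · intro j
        by_cases hj : θ j = 0
        · simp only [hj, if_pos, zero_div, mul_zero, zero_add]
          field_simp
        · simp only [hj, if_neg, not_false_iff, if_false]
          rw [hnonzero j hj]
          ring
      · calc ∑ j, θ j / norm2 θ * θ j = (∑ j, θ j ^ 2) / norm2 θ := by
              rw [Finset.sum_div]
              exact Finset.sum_congr rfl fun j _ => by ring
          _ = norm2 θ := by
              rw [← sq_norm2, sq, mul_div_assoc, div_self hnpos.ne', mul_one]
      · intro j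
        by_cases hj : θ j = 0
        · simp [hj]
        · simp only [hj, if_neg, not_false_iff, if_false]
          exact real_sign_mul_self (θ j)
  -- Main argument
  set Δ : Fin k → ℝ := fun j => θ' j - θ j with hΔ
  have hpt : ∀ i, (r - Z.mulVec θ') i = ρ i - Z.mulVec Δ i := by
    intro i
    simp only [hρ, hΔ, Pi.sub_apply, Matrix.mulVec, dotProduct, mul_sub,
      Finset.sum_sub_distrib]
    ring
  have swap : ∑ i, ρ i * Z.mulVec Δ i = ∑ j, (∑ i, Z i j * ρ i) * Δ j := by
    simp only [Matrix.mulVec, dotProduct, Finset.mul_sum, Finset.sum_mul]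
    rw [Finset.sum_comm]
    exact Finset.sum_congr rfl fun j _ => Finset.sum_congr rfl fun i _ => by ring
  have key : ∑ i, (r - Z.mulVec θ') i ^ 2
      = ∑ i, ρ i ^ 2 - 2 * ∑ j, (∑ i, Z i j * ρ i) * Δ j
        + ∑ i, Z.mulVec Δ i ^ 2 := by
    calc ∑ i, (r - Z.mulVec θ') i ^ 2
        = ∑ i, (ρ i ^ 2 - 2 * (ρ i * Z.mulVec Δ i) + Z.mulVec Δ i ^ 2) :=
          Finset.sum_congr rfl fun i _ => by rw [hpt i]; ring
      _ = ∑ i, ρ i ^ 2 - 2 * ∑ i, ρ i * Z.mulVec Δ i + ∑ i, Z.mulVec Δ i ^ 2 := by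
          rw [Finset.sum_add_distrib, Finset.sum_sub_distrib, Finset.mul_sum]
      _ = _ := by rw [swap]
  have hsub : ∑ j, (∑ i, Z i j * ρ i) * Δ j
      = lam1 * (∑ j, s j * θ' j - norm2 θ)
        + lam2 * (∑ j, t j * θ' j - ∑ j, |θ j|) := by
    have e1 : ∑ j, (∑ i, Z i j * ρ i) * Δ j
        = ∑ j, (lam1 * (s j * θ' j) - lam1 * (s j * θ j)
            + (lam2 * (t j * θ' j) - lam2 * (t j * θ j))) :=
      Finset.sum_congr rfl fun j _ => by rw [hst j, hΔ]; ring
    rw [e1]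
    simp only [Finset.sum_add_distrib, Finset.sum_sub_distrib, ← Finset.mul_sum]
    rw [hsθ]
    have e2 : ∑ j, t j * θ j = ∑ j, |θ j| :=
      Finset.sum_congr rfl fun j _ => htθ j
    rw [e2]
    ring
  have hb1 : ∑ j, s j * θ' j ≤ norm2 θ' :=
    (cauchy_norm2 s θ').trans (mul_le_of_le_one_left (norm2_nonneg θ') hs)
  have hb2 : ∑ j, t j * θ' j ≤ ∑ j, |θ' j| :=
    Finset.sum_le_sum fun j _ =>
      (le_abs_self _).trans (by
        rw [abs_mul]
        exact mul_le_of_le_one_left (abs_nonneg _) (ht j))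
  have hB : (0 : ℝ) ≤ ∑ i, Z.mulVec Δ i ^ 2 :=
    Finset.sum_nonneg fun i _ => sq_nonneg _
  have m1 := mul_le_mul_of_nonneg_left hb1 hlam1.le
  have m2 := mul_le_mul_of_nonneg_left hb2 hlam2.le
  rw [sq_norm2, sq_norm2, key, hsub]
  nlinarith [m1, m2, hB]
end
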